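/- If G is a finite simple locally linear graph, then the number of pentagons (induced 5-cycles) in G equals the number of pentagons (induced 5-cycles) in the triangle graph G* of G. -/

import Mathlib

open SimpleGraph Polynomial Matrix

variable {V : Type*}

/-- A finite simple graph is *locally linear* if it has no isolated vertices and
every edge lies in exactly one triangle (3-clique). -/
def IsLocallyLinear (G : SimpleGraph V) : Prop :=
  (∀ v : V, ∃ w : V, G.Adj v w) ∧
    ∀ ⦃x y : V⦄, G.Adj x y → ∃! t : Finset V, G.IsNClique 3 t ∧ x ∈ t ∧ y ∈ t

/-- The triangle graph `G*` of `G`: its vertices are the triangles (3-cliques) of `G`,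
two distinct triangles being adjacent iff they share a common vertex. -/
def TriangleGraph (G : SimpleGraph V) : SimpleGraph {t : Finset V // G.IsNClique 3 t} where
  Adj a b := a ≠ b ∧ ∃ v : V, v ∈ a.1 ∧ v ∈ b.1
  symm := ⟨fun _ _ ⟨h, v, hv1, hv2⟩ => ⟨h.symm, v, hv2, hv1⟩⟩
  loopless := ⟨fun _ ⟨h, _⟩ => h rfl⟩

/-- The diamond `K₄ - e`: the complete graph on four vertices with the edge `01` deleted. -/
def diamondGraph : SimpleGraph (Fin 4) where
  Adj a b := a ≠ b ∧ ¬(a = 0 ∧ b = 1) ∧ ¬(a = 1 ∧ b = 0)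
  symm := ⟨fun _ _ ⟨h1, h2, h3⟩ =>
    ⟨h1.symm, fun ⟨ha, hb⟩ => h3 ⟨hb, ha⟩, fun ⟨ha, hb⟩ => h2 ⟨hb, ha⟩⟩⟩
  loopless := ⟨fun _ ⟨h, _⟩ => h rfl⟩

instance (G : SimpleGraph V) [DecidableEq V] [Fintype V] [DecidableRel G.Adj] :
    Fintype {t : Finset V // G.IsNClique 3 t} := Subtype.fintype _

instance (G : SimpleGraph V) [Fintype V] [DecidableEq V] :
    DecidableRel (TriangleGraph G).Adj :=
  fun a b => inferInstanceAs (Decidable (a ≠ b ∧ ∃ v : V, v ∈ a.1 ∧ v ∈ b.1))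

/-- The set of vertex subsets of `H` inducing a cycle of length `n`. -/
def inducedCycleSets {W : Type*} (H : SimpleGraph W) (n : ℕ) : Set (Set W) :=
  {s : Set W | s.ncard = n ∧ Nonempty (H.induce s ≃g cycleGraph n)}

/-!
Label a pentagon of `G` as an induced embedding `φ` of `C₅`. In a locally linear graph each
edge `φ i φ (i+1)` lies in a unique triangle `Tᵢ`, and `T₀, …, T₄` is an induced 5-cycle of `G*`:
consecutive triangles share `φ (i+1)`, while a common vertex of `Tᵢ` and `Tᵢ₊₂` would close a
triangle on `φ (i+1) φ (i+2)` other than `Tᵢ₊₁`. Conversely, a pentagon `T₀, …, T₄` of `G*`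
yields the pentagon of `G` formed by the vertices `Tᵢ₋₁ ∩ Tᵢ`, since two distinct triangles
share at most one vertex. The two constructions are mutually inverse; on vertex sets they read
"the triangles spanned by two vertices of `s`" and "the vertices lying in two triangles of `S`".
-/

theorem cycleGraph_five_adj_add_one (i : Fin 5) : (cycleGraph 5).Adj i (i + 1) := by
  revert i; decide

theorem cycleGraph_five_adj_sub_one (i : Fin 5) : (cycleGraph 5).Adj (i - 1) i := by
  revert i; decide

theorem cycleGraph_five_eq_add_one_or_of_adj {i j : Fin 5} :
    (cycleGraph 5).Adj i j → j = i + 1 ∨ i = j + 1 := by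
  revert i j; decide

theorem cycleGraph_five_eq_add_two_or_of_not_adj {i j : Fin 5} :
    i ≠ j → ¬(cycleGraph 5).Adj i j → j = i + 2 ∨ i = j + 2 := by
  revert i j; decide

theorem cycleGraph_five_not_adj_of_adj_add_one {i k : Fin 5} :
    (cycleGraph 5).Adj k i → ¬(cycleGraph 5).Adj k (i + 1) := by
  revert i k; decide

namespace IsLocallyLinear

variable {G : SimpleGraph V} {t t' : Finset V} {x y z : V}

theorem eq_of_mem_of_mem (hG : IsLocallyLinear G) (ht : G.IsNClique 3 t)
    (ht' : G.IsNClique 3 t') (hxy : x ≠ y) (hx : x ∈ t) (hy : y ∈ t) (hx' : x ∈ t')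
    (hy' : y ∈ t') : t = t' :=
  (hG.2 (ht.1 hx hy hxy)).unique ⟨ht, hx, hy⟩ ⟨ht', hx', hy'⟩

theorem mem_of_adj_of_adj (hG : IsLocallyLinear G) (ht : G.IsNClique 3 t) (hxy : x ≠ y)
    (hx : x ∈ t) (hy : y ∈ t) (hxz : G.Adj x z) (hyz : G.Adj y z) : z ∈ t := by
  classical
  have hxyz : G.IsNClique 3 {x, y, z} := is3Clique_triple_iff.2 ⟨ht.1 hx hy hxy, hxz, hyz⟩
  rw [hG.eq_of_mem_of_mem ht hxyz hxy hx hy (by simp) (by simp)]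
  simp

noncomputable def triangle (hG : IsLocallyLinear G) (h : G.Adj x y) :
    {t : Finset V // G.IsNClique 3 t} :=
  ⟨(hG.2 h).exists.choose, (hG.2 h).exists.choose_spec.1⟩

theorem left_mem_triangle (hG : IsLocallyLinear G) (h : G.Adj x y) : x ∈ (hG.triangle h).1 :=
  (hG.2 h).exists.choose_spec.2.1

theorem right_mem_triangle (hG : IsLocallyLinear G) (h : G.Adj x y) : y ∈ (hG.triangle h).1 :=
  (hG.2 h).exists.choose_spec.2.2

theorem triangle_eq (hG : IsLocallyLinear G) (h : G.Adj x y)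
    {T : {t : Finset V // G.IsNClique 3 t}} (hx : x ∈ T.1) (hy : y ∈ T.1) :
    hG.triangle h = T :=
  Subtype.ext <| hG.eq_of_mem_of_mem (hG.triangle h).2 T.2 h.ne
    (hG.left_mem_triangle h) (hG.right_mem_triangle h) hx hy

end IsLocallyLinear

theorem mem_inducedCycleSets_iff {W : Type*} {H : SimpleGraph W} {n : ℕ} {s : Set W} :
    s ∈ inducedCycleSets H n ↔ ∃ φ : cycleGraph n ↪g H, Set.range φ = s := by
  constructor
  · rintro ⟨-, ⟨e⟩⟩
    refine ⟨(Embedding.induce s).comp e.symm.toEmbedding, ?_⟩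
    change Set.range (Subtype.val ∘ e.symm) = s
    rw [Set.range_comp, e.symm.surjective.range_eq, Set.image_univ, Subtype.range_coe]
  · rintro ⟨φ, rfl⟩
    exact ⟨by rw [Set.ncard_range_of_injective φ.injective, Nat.card_fin], ⟨φ.isoInduceRange.symm⟩⟩

def spannedTriangles (G : SimpleGraph V) (s : Set V) : Set {t : Finset V // G.IsNClique 3 t} :=
  {T | ∃ x ∈ s, ∃ y ∈ s, x ≠ y ∧ x ∈ T.1 ∧ y ∈ T.1}

def sharedVertices {G : SimpleGraph V} (S : Set {t : Finset V // G.IsNClique 3 t}) : Set V :=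
  {v | ∃ T ∈ S, ∃ T' ∈ S, T ≠ T' ∧ v ∈ T.1 ∧ v ∈ T'.1}

namespace IsLocallyLinear

variable {G : SimpleGraph V} (hG : IsLocallyLinear G) (φ : cycleGraph 5 ↪g G)

noncomputable def edgeTriangle (i : Fin 5) : {t : Finset V // G.IsNClique 3 t} :=
  hG.triangle (φ.map_adj_iff.2 (cycleGraph_five_adj_add_one i))

theorem apply_mem_edgeTriangle (i : Fin 5) : φ i ∈ (hG.edgeTriangle φ i).1 :=
  hG.left_mem_triangle _

theorem apply_add_one_mem_edgeTriangle (i : Fin 5) : φ (i + 1) ∈ (hG.edgeTriangle φ i).1 :=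
  hG.right_mem_triangle _

theorem edgeTriangle_eq {i : Fin 5} {T : {t : Finset V // G.IsNClique 3 t}}
    (hi : φ i ∈ T.1) (hi' : φ (i + 1) ∈ T.1) : hG.edgeTriangle φ i = T :=
  hG.triangle_eq _ hi hi'

theorem apply_mem_edgeTriangle_iff {i k : Fin 5} :
    φ k ∈ (hG.edgeTriangle φ i).1 ↔ k = i ∨ k = i + 1 := by
  refine ⟨fun hk => ?_, ?_⟩
  · by_contra! hne
    have hadj (j : Fin 5) (hj : φ j ∈ (hG.edgeTriangle φ i).1) (hkj : k ≠ j) :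
        (cycleGraph 5).Adj k j :=
      φ.map_adj_iff.1 ((hG.edgeTriangle φ i).2.1 hk hj (φ.injective.ne hkj))
    exact cycleGraph_five_not_adj_of_adj_add_one
      (hadj i (hG.apply_mem_edgeTriangle φ i) hne.1)
      (hadj (i + 1) (hG.apply_add_one_mem_edgeTriangle φ i) hne.2)
  · rintro (rfl | rfl)
    exacts [hG.apply_mem_edgeTriangle φ _, hG.apply_add_one_mem_edgeTriangle φ _]

theorem edgeTriangle_injective : Function.Injective (hG.edgeTriangle φ) := by
  intro i j hij
  have hi := (hG.apply_mem_edgeTriangle_iff φ).1 (hij ▸ hG.apply_mem_edgeTriangle φ i)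
  have hi' := (hG.apply_mem_edgeTriangle_iff φ).1 (hij ▸ hG.apply_add_one_mem_edgeTriangle φ i)
  clear hij
  revert i j
  decide

theorem disjoint_edgeTriangle_add_two (i : Fin 5) :
    Disjoint (hG.edgeTriangle φ i).1 (hG.edgeTriangle φ (i + 2)).1 := by
  have h1 : φ (i + 1) ∉ (hG.edgeTriangle φ (i + 2)).1 := by
    simp [apply_mem_edgeTriangle_iff, add_assoc]
  have h2 : φ (i + 2) ∉ (hG.edgeTriangle φ i).1 := by
    simp [apply_mem_edgeTriangle_iff]
  have hadj : G.Adj (φ (i + 1)) (φ (i + 2)) := by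
    simpa [add_assoc] using φ.map_adj_iff.2 (cycleGraph_five_adj_add_one (i + 1))
  refine Finset.disjoint_left.2 fun v hv hv' => h2 ?_
  refine hG.mem_of_adj_of_adj (hG.edgeTriangle φ i).2 ?_ hv
    (hG.apply_add_one_mem_edgeTriangle φ i) ?_ hadj
  · rintro rfl; exact h1 hv'
  · exact (hG.edgeTriangle φ (i + 2)).2.1 hv' (hG.apply_mem_edgeTriangle φ (i + 2))
      (by rintro rfl; exact h2 hv)

theorem exists_mem_edgeTriangle_iff {i j : Fin 5} :
    (∃ v, v ∈ (hG.edgeTriangle φ i).1 ∧ v ∈ (hG.edgeTriangle φ j).1) ↔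
      i = j ∨ (cycleGraph 5).Adj i j := by
  refine ⟨fun ⟨v, hv, hv'⟩ => ?_, ?_⟩
  · by_contra! hij
    rcases cycleGraph_five_eq_add_two_or_of_not_adj hij.1 hij.2 with rfl | rfl
    exacts [Finset.disjoint_left.1 (hG.disjoint_edgeTriangle_add_two φ i) hv hv',
      Finset.disjoint_left.1 (hG.disjoint_edgeTriangle_add_two φ j) hv' hv]
  · rintro (rfl | hij)
    · exact ⟨φ i, hG.apply_mem_edgeTriangle φ i, hG.apply_mem_edgeTriangle φ i⟩
    rcases cycleGraph_five_eq_add_one_or_of_adj hij with rfl | rfl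
    exacts [⟨φ (i + 1), hG.apply_add_one_mem_edgeTriangle φ i, hG.apply_mem_edgeTriangle φ _⟩,
      ⟨φ (j + 1), hG.apply_mem_edgeTriangle φ _, hG.apply_add_one_mem_edgeTriangle φ j⟩]

noncomputable def pentagonToTriangleGraph : cycleGraph 5 ↪g TriangleGraph G where
  toFun := hG.edgeTriangle φ
  inj' := hG.edgeTriangle_injective φ
  map_rel_iff' {i j} := by
    change (hG.edgeTriangle φ i ≠ hG.edgeTriangle φ j ∧
      ∃ v, v ∈ (hG.edgeTriangle φ i).1 ∧ v ∈ (hG.edgeTriangle φ j).1) ↔ _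
    rw [(hG.edgeTriangle_injective φ).ne_iff, hG.exists_mem_edgeTriangle_iff]
    exact ⟨fun h => h.2.resolve_left h.1, fun h => ⟨h.ne, Or.inr h⟩⟩

theorem spannedTriangles_range :
    spannedTriangles G (Set.range φ) = Set.range (hG.pentagonToTriangleGraph φ) := by
  ext T
  constructor
  · rintro ⟨_, ⟨a, rfl⟩, _, ⟨b, rfl⟩, hab, ha, hb⟩
    rcases cycleGraph_five_eq_add_one_or_of_adj (φ.map_adj_iff.1 (T.2.1 ha hb hab)) with rfl | rfl
    exacts [⟨a, hG.edgeTriangle_eq φ ha hb⟩, ⟨b, hG.edgeTriangle_eq φ hb ha⟩]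
  · rintro ⟨i, rfl⟩
    exact ⟨φ i, ⟨i, rfl⟩, φ (i + 1), ⟨i + 1, rfl⟩, φ.injective.ne (by simp),
      hG.apply_mem_edgeTriangle φ i, hG.apply_add_one_mem_edgeTriangle φ i⟩

end IsLocallyLinear

namespace TriangleGraph

variable {G : SimpleGraph V}

theorem eq_or_adj_of_mem_of_mem {W : Type*} {H : SimpleGraph W} (ψ : H ↪g TriangleGraph G)
    {a b : W} {v : V} (ha : v ∈ (ψ a).1) (hb : v ∈ (ψ b).1) : a = b ∨ H.Adj a b :=
  or_iff_not_imp_left.2 fun hab => ψ.map_adj_iff.1 ⟨ψ.injective.ne hab, v, ha, hb⟩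

variable (ψ : cycleGraph 5 ↪g TriangleGraph G)

noncomputable def sharedVertex (i : Fin 5) : V :=
  (ψ.map_adj_iff.2 (cycleGraph_five_adj_sub_one i)).2.choose

theorem sharedVertex_mem_sub_one (i : Fin 5) : sharedVertex ψ i ∈ (ψ (i - 1)).1 :=
  (ψ.map_adj_iff.2 (cycleGraph_five_adj_sub_one i)).2.choose_spec.1

theorem sharedVertex_mem (i : Fin 5) : sharedVertex ψ i ∈ (ψ i).1 :=
  (ψ.map_adj_iff.2 (cycleGraph_five_adj_sub_one i)).2.choose_spec.2

theorem sharedVertex_mem_iff {i k : Fin 5} :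
    sharedVertex ψ k ∈ (ψ i).1 ↔ i = k - 1 ∨ i = k := by
  refine ⟨fun h => ?_, ?_⟩
  · have h₁ := eq_or_adj_of_mem_of_mem ψ h (sharedVertex_mem_sub_one ψ k)
    have h₂ := eq_or_adj_of_mem_of_mem ψ h (sharedVertex_mem ψ k)
    clear h
    revert i k
    decide
  · rintro (rfl | rfl)
    exacts [sharedVertex_mem_sub_one ψ k, sharedVertex_mem ψ _]

theorem sharedVertex_injective : Function.Injective (sharedVertex ψ) := by
  intro i j hij
  have h₁ := (sharedVertex_mem_iff ψ).1 (hij ▸ sharedVertex_mem_sub_one ψ i)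
  have h₂ := (sharedVertex_mem_iff ψ).1 (hij ▸ sharedVertex_mem ψ i)
  clear hij
  revert i j
  decide

theorem sharedVertex_add_one_mem (i : Fin 5) : sharedVertex ψ (i + 1) ∈ (ψ i).1 :=
  (sharedVertex_mem_iff ψ).2 (Or.inl (add_sub_cancel_right i 1).symm)

theorem adj_sharedVertex_add_one (i : Fin 5) :
    G.Adj (sharedVertex ψ i) (sharedVertex ψ (i + 1)) :=
  (ψ i).2.1 (sharedVertex_mem ψ i) (sharedVertex_add_one_mem ψ i)
    ((sharedVertex_injective ψ).ne (by simp))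

theorem not_adj_sharedVertex_add_two (hG : IsLocallyLinear G) (i : Fin 5) :
    ¬G.Adj (sharedVertex ψ i) (sharedVertex ψ (i + 2)) := by
  intro h
  have hmem : sharedVertex ψ (i + 2) ∈ (ψ i).1 := by
    refine hG.mem_of_adj_of_adj (ψ i).2 ((sharedVertex_injective ψ).ne (by simp))
      (sharedVertex_mem ψ i) (sharedVertex_add_one_mem ψ i) h ?_
    simpa [add_assoc] using adj_sharedVertex_add_one ψ (i + 1)
  simp [sharedVertex_mem_iff, add_sub_assoc] at hmem

theorem sharedVertex_adj_iff (hG : IsLocallyLinear G) {i j : Fin 5} :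
    G.Adj (sharedVertex ψ i) (sharedVertex ψ j) ↔ (cycleGraph 5).Adj i j := by
  refine ⟨fun h => by_contra fun hij => ?_, fun h => ?_⟩
  · have hne : i ≠ j := fun e => h.ne (congrArg _ e)
    rcases cycleGraph_five_eq_add_two_or_of_not_adj hne hij with rfl | rfl
    exacts [not_adj_sharedVertex_add_two ψ hG i h, not_adj_sharedVertex_add_two ψ hG j h.symm]
  · rcases cycleGraph_five_eq_add_one_or_of_adj h with rfl | rfl
    exacts [adj_sharedVertex_add_one ψ i, (adj_sharedVertex_add_one ψ j).symm]

theorem sharedVertex_add_one_eq (hG : IsLocallyLinear G) {i : Fin 5} {v : V} (hv : v ∈ (ψ i).1)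
    (hv' : v ∈ (ψ (i + 1)).1) : sharedVertex ψ (i + 1) = v := by
  by_contra hne
  have hψ : ψ i ≠ ψ (i + 1) := ψ.injective.ne (by simp)
  exact hψ (Subtype.ext (hG.eq_of_mem_of_mem (ψ i).2 (ψ (i + 1)).2 hne
    (sharedVertex_add_one_mem ψ i) hv (sharedVertex_mem ψ _) hv'))

end TriangleGraph

namespace IsLocallyLinear

open TriangleGraph

variable {G : SimpleGraph V} (hG : IsLocallyLinear G) (ψ : cycleGraph 5 ↪g TriangleGraph G)

noncomputable def pentagonOfTriangleGraph : cycleGraph 5 ↪g G where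
  toFun := sharedVertex ψ
  inj' := sharedVertex_injective ψ
  map_rel_iff' := sharedVertex_adj_iff ψ hG

theorem sharedVertices_range :
    sharedVertices (Set.range ψ) = Set.range (hG.pentagonOfTriangleGraph ψ) := by
  ext v
  constructor
  · rintro ⟨_, ⟨a, rfl⟩, _, ⟨b, rfl⟩, hab, ha, hb⟩
    rcases cycleGraph_five_eq_add_one_or_of_adj (ψ.map_adj_iff.1 ⟨hab, v, ha, hb⟩) with rfl | rfl
    exacts [⟨a + 1, sharedVertex_add_one_eq ψ hG ha hb⟩,
      ⟨b + 1, sharedVertex_add_one_eq ψ hG hb ha⟩]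
  · rintro ⟨i, rfl⟩
    exact ⟨ψ (i - 1), ⟨i - 1, rfl⟩, ψ i, ⟨i, rfl⟩, ψ.injective.ne (by simp),
      sharedVertex_mem_sub_one ψ i, sharedVertex_mem ψ i⟩

theorem pentagonOfTriangleGraph_pentagonToTriangleGraph (φ : cycleGraph 5 ↪g G) :
    hG.pentagonOfTriangleGraph (hG.pentagonToTriangleGraph φ) = φ := by
  ext k
  have h := sharedVertex_add_one_eq (hG.pentagonToTriangleGraph φ) hG
    (hG.apply_add_one_mem_edgeTriangle φ (k - 1)) (hG.apply_mem_edgeTriangle φ (k - 1 + 1))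
  rwa [sub_add_cancel] at h

theorem pentagonToTriangleGraph_pentagonOfTriangleGraph :
    hG.pentagonToTriangleGraph (hG.pentagonOfTriangleGraph ψ) = ψ := by
  ext1 i
  exact hG.edgeTriangle_eq _ (sharedVertex_mem ψ i) (sharedVertex_add_one_mem ψ i)

end IsLocallyLinear

theorem card_pentagons_eq_general (G : SimpleGraph V)
    (hG : IsLocallyLinear G) :
    (inducedCycleSets G 5).ncard = (inducedCycleSets (TriangleGraph G) 5).ncard := by
  have left_inv : Set.LeftInvOn sharedVertices (spannedTriangles G) (inducedCycleSets G 5) := by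
    intro _ h
    obtain ⟨φ, rfl⟩ := mem_inducedCycleSets_iff.1 h
    rw [hG.spannedTriangles_range, hG.sharedVertices_range,
      hG.pentagonOfTriangleGraph_pentagonToTriangleGraph]
  have right_inv : Set.RightInvOn sharedVertices (spannedTriangles G)
      (inducedCycleSets (TriangleGraph G) 5) := by
    intro _ h
    obtain ⟨ψ, rfl⟩ := mem_inducedCycleSets_iff.1 h
    rw [hG.sharedVertices_range, hG.spannedTriangles_range,
      hG.pentagonToTriangleGraph_pentagonOfTriangleGraph]
  have maps_to : Set.MapsTo (spannedTriangles G) (inducedCycleSets G 5)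
      (inducedCycleSets (TriangleGraph G) 5) := by
    intro _ h
    obtain ⟨φ, rfl⟩ := mem_inducedCycleSets_iff.1 h
    exact mem_inducedCycleSets_iff.2 ⟨_, (hG.spannedTriangles_range φ).symm⟩
  have maps_to' : Set.MapsTo sharedVertices (inducedCycleSets (TriangleGraph G) 5)
      (inducedCycleSets G 5) := by
    intro _ h
    obtain ⟨ψ, rfl⟩ := mem_inducedCycleSets_iff.1 h
    exact mem_inducedCycleSets_iff.2 ⟨_, (hG.sharedVertices_range ψ).symm⟩
  exact (Set.InvOn.bijOn ⟨left_inv, right_inv⟩ maps_to maps_to').ncard_eq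

/-- A finite locally linear graph has the same number of pentagons
(induced 5-cycles) as its triangle graph. -/
theorem card_pentagons_eq [Fintype V] (G : SimpleGraph V)
    (hG : IsLocallyLinear G) :
    (inducedCycleSets G 5).ncard = (inducedCycleSets (TriangleGraph G) 5).ncard :=
  card_pentagons_eq_general G hG
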